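/- arXiv:1805.05761 — 2 statements merged into one kernel-verified Lean document; each statement's English description precedes it below -/
import Mathlib

section
/- Let 2 ≤ k ≤ n. There exists a constant c(n,k) > 0, depending only on n and k, such that for every λ ∈ Γ_k ⊂ ℝ^n: Σ_{i=1}^n σ_{k−1}(λ|i) ≥ c(n,k) · S_k(λ)^{(k−2)/(k−1)} · (max_i λ_i)^{1/(k−1)}. Equivalently, dividing by S_k(λ) > 0: Σ_i σ_{k−1}(λ|i)/S_k(λ) ≥ c(n,k) · (max_i λ_i)^{1/(k−1)} / S_k(λ)^{1/(k−1)}. -/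
open Finset

/-- The `m`-th elementary symmetric polynomial of `lam : Fin n → ℝ`. -/
noncomputable def esymmS (n m : ℕ) (lam : Fin n → ℝ) : ℝ :=
  ∑ s ∈ Finset.univ.powersetCard m, ∏ i ∈ s, lam i

/-- The Gårding cone `Γ_m ⊆ ℝ^n`. -/
def GammaCone (n m : ℕ) (lam : Fin n → ℝ) : Prop :=
  ∀ j : ℕ, 1 ≤ j → j ≤ m → 0 < esymmS n j lam

/-- `σ_m(λ|i)`: the `m`-th elementary symmetric polynomial of `λ` with the `i`-th entry deleted. -/
noncomputable def esymmDel (n m : ℕ) (lam : Fin n → ℝ) (i : Fin n) : ℝ :=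
  ∑ s ∈ (Finset.univ.erase i).powersetCard m, ∏ l ∈ s, lam l

/-- `σ_m(λ|ij)`: the `m`-th elementary symmetric polynomial of `λ` with the `i`-th and `j`-th entries deleted. -/
noncomputable def esymmDel2 (n m : ℕ) (lam : Fin n → ℝ) (i j : Fin n) : ℝ :=
  ∑ s ∈ ((Finset.univ.erase i).erase j).powersetCard m, ∏ l ∈ s, lam l

/-!
Newton's inequalities `S_{j-1} S_{j+1} ≤ S_j²`, which hold for every real vector because
`∏ (X + λ_i)` is real-rooted, make `S_1, …, S_k` log-concave on `Γ_k`; telescoping gives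
`S_1 S_k^{k-2} ≤ S_{k-1}^{k-1}`. Since `S_1² = Σ λ_i² + 2 S_2 > (max λ)²`, this yields
`S_k^{k-2} max λ ≤ S_{k-1}^{k-1}`, while `Σ_i σ_{k-1}(λ|i) = (n-k+1) S_{k-1} ≥ S_{k-1}`.
So the bound holds with `c(n,k) = 1`.
-/

open Polynomial

theorem Nat.descFactorial_succ_sq_le (d : ℕ) :
    (d + 1).descFactorial d ^ 2 ≤ 2 * (d + 2).descFactorial d * d.descFactorial d := by
  have h1 := Nat.succ_descFactorial (d + 1) d
  have h0 := Nat.succ_descFactorial d d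
  rw [show d + 1 + 1 - d = 2 by omega] at h1
  rw [show d + 1 - d = 1 by omega, one_mul] at h0
  nlinarith

namespace Polynomial

theorem Splits.derivative {p : ℝ[X]} (hp : p.Splits) : p.derivative.Splits := by
  rw [splits_iff_card_roots] at hp ⊢
  have := p.card_roots_le_derivative
  have := p.derivative.card_roots'
  have := p.natDegree_derivative_le
  omega

theorem Splits.iterate_derivative {p : ℝ[X]} (hp : p.Splits) (k : ℕ) :
    (Polynomial.derivative^[k] p).Splits := by
  induction k with
  | zero => exact hp
  | succ k ih => rw [Function.iterate_succ_apply']; exact ih.derivative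

theorem Splits.reverse {K : Type*} [Field K] {p : K[X]} (hp : p.Splits) : p.reverse.Splits := by
  induction hp using Submonoid.closure_induction with
  | mem f hf =>
    refine .of_natDegree_le_one (f.reverse_natDegree_le.trans ?_)
    rcases hf with ⟨a, rfl⟩ | ⟨a, rfl⟩
    · rw [natDegree_C]; exact zero_le_one
    · exact (natDegree_X_add_C a).le
  | one => rw [← C_1, reverse_C]; exact .C 1
  | mul f g _ _ hf hg => rw [reverse_mul_of_domain]; exact hf.mul hg

theorem Splits.four_mul_coeff_zero_mul_coeff_two_le {K : Type*} [Field K] [LinearOrder K]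
    [IsStrictOrderedRing K] {p : K[X]} (hp : p.Splits) (hdeg : p.natDegree ≤ 2) :
    4 * p.coeff 0 * p.coeff 2 ≤ p.coeff 1 ^ 2 := by
  rcases eq_or_ne (p.coeff 2) 0 with h2 | h2
  · rw [h2, mul_zero]; positivity
  have hdeg2 : p.natDegree = 2 := hdeg.antisymm (le_natDegree_of_ne_zero h2)
  obtain ⟨x, hx⟩ := hp.exists_eval_eq_zero <| by
    rw [degree_eq_natDegree (by rintro rfl; simp at h2), hdeg2]; decide
  rw [eval_eq_sum_range, hdeg2] at hx
  simp only [Finset.sum_range_succ, Finset.sum_range_zero, pow_zero, pow_one, zero_add] at hx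
  have hdisc : p.coeff 1 ^ 2 - 4 * p.coeff 0 * p.coeff 2 =
      (2 * p.coeff 2 * x + p.coeff 1) ^ 2 := by
    linear_combination (-4 * p.coeff 2) * hx
  nlinarith [sq_nonneg (2 * p.coeff 2 * x + p.coeff 1)]

/-- Cutting a real-rooted `p` down to the quadratic through its coefficients `m, m + 1, m + 2`
(differentiate `m` times, reverse, differentiate again) keeps it real-rooted, at the price of
these factorial weights. -/
theorem Splits.four_mul_descFactorial_mul_coeff_le {p : ℝ[X]} (hp : p.Splits) {m : ℕ}
    (hm : m + 2 ≤ p.natDegree) :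
    let d := p.natDegree - (m + 2)
    4 * (d.descFactorial d * ((m + 2).descFactorial m * p.coeff (m + 2))) *
        ((d + 2).descFactorial d * (m.descFactorial m * p.coeff m)) ≤
      ((d + 1).descFactorial d * ((m + 1).descFactorial m * p.coeff (m + 1))) ^ 2 := by
  intro d
  set q := Polynomial.derivative^[m] p
  have hq_coeff (j : ℕ) : q.coeff j = (j + m).descFactorial m * p.coeff (j + m) := by
    rw [coeff_iterate_derivative, nsmul_eq_mul]
  have hq_deg : q.natDegree = d + 2 := by
    refine le_antisymm ((natDegree_iterate_derivative p m).trans (by omega))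
      (le_natDegree_of_ne_zero ?_)
    rw [hq_coeff, show d + 2 + m = p.natDegree by omega]
    exact mul_ne_zero (by simp only [ne_eq, Nat.cast_eq_zero, Nat.descFactorial_eq_zero_iff_lt]; omega)
      (leadingCoeff_ne_zero.mpr (by rintro rfl; simp at hm))
  set r := Polynomial.derivative^[d] q.reverse
  have hr_coeff (j : ℕ) (hj : j ≤ 2) :
      r.coeff j = (j + d).descFactorial d * q.coeff (2 - j) := by
    rw [coeff_iterate_derivative, nsmul_eq_mul, coeff_reverse, hq_deg, revAt_le (by omega),
      show d + 2 - (j + d) = 2 - j by omega]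
  have hr_deg : r.natDegree ≤ 2 :=
    (natDegree_iterate_derivative _ d).trans (by have := q.reverse_natDegree_le; omega)
  have hdisc :=
    ((hp.iterate_derivative m).reverse.iterate_derivative d).four_mul_coeff_zero_mul_coeff_two_le
      hr_deg
  rw [hr_coeff 0 (by omega), hr_coeff 1 (by omega), hr_coeff 2 (by omega), hq_coeff, hq_coeff,
    hq_coeff] at hdisc
  simpa [add_comm _ m, add_comm _ d] using hdisc

theorem Splits.coeff_mul_coeff_le_sq {p : ℝ[X]} (hp : p.Splits) (m : ℕ) :
    p.coeff m * p.coeff (m + 2) ≤ p.coeff (m + 1) ^ 2 := by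
  obtain hlt | hle := lt_or_ge p.natDegree (m + 2)
  · rw [coeff_eq_zero_of_natDegree_lt hlt, mul_zero]; positivity
  have hweighted := hp.four_mul_descFactorial_mul_coeff_le hle
  set d := p.natDegree - (m + 2)
  have hpos (a b : ℕ) : (0 : ℝ) < (b + a).descFactorial b := by
    exact_mod_cast Nat.descFactorial_pos.mpr (by omega)
  set A : ℝ := (2 * (m + 2).descFactorial m * m.descFactorial m) *
    (2 * (d + 2).descFactorial d * d.descFactorial d)
  have hA : 0 < A := mul_pos (mul_pos (mul_pos two_pos (hpos 2 m)) (hpos 0 m))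
    (mul_pos (mul_pos two_pos (hpos 2 d)) (hpos 0 d))
  have hweights : (((m + 1).descFactorial m : ℝ) * (d + 1).descFactorial d) ^ 2 ≤ A := by
    rw [mul_pow]
    exact mul_le_mul (by exact_mod_cast Nat.descFactorial_succ_sq_le m)
      (by exact_mod_cast Nat.descFactorial_succ_sq_le d) (by positivity) (by positivity)
  refine le_of_mul_le_mul_left ?_ hA
  calc A * (p.coeff m * p.coeff (m + 2))
      ≤ (((m + 1).descFactorial m : ℝ) * (d + 1).descFactorial d) ^ 2 * p.coeff (m + 1) ^ 2 := by
        linear_combination hweighted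
    _ ≤ A * p.coeff (m + 1) ^ 2 := mul_le_mul_of_nonneg_right hweights (sq_nonneg _)

end Polynomial

theorem mul_pow_le_pow_succ_of_log_concave {a : ℕ → ℝ} {N : ℕ} (hpos : ∀ i ≤ N, 0 < a i)
    (hlc : ∀ i, i + 2 ≤ N → a i * a (i + 2) ≤ a (i + 1) ^ 2) :
    ∀ j, j + 1 ≤ N → a 0 * a (j + 1) ^ j ≤ a j ^ (j + 1) := by
  intro j hj
  induction j with
  | zero => simp
  | succ j ih =>
    have hj0 := hpos j (by omega)
    refine le_of_mul_le_mul_left ?_ (pow_pos hj0 (j + 1))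
    calc a j ^ (j + 1) * (a 0 * a (j + 2) ^ (j + 1))
        = a 0 * (a j * a (j + 2)) ^ (j + 1) := by ring
      _ ≤ a 0 * (a (j + 1) ^ 2) ^ (j + 1) := by
        have := hpos 0 (by omega)
        gcongr
        · exact mul_nonneg hj0.le (hpos (j + 2) hj).le
        · exact hlc j hj
      _ = a 0 * a (j + 1) ^ j * a (j + 1) ^ (j + 2) := by ring
      _ ≤ a j ^ (j + 1) * a (j + 1) ^ (j + 2) := by
        have := hpos (j + 1) (by omega)
        gcongr
        exact ih (by omega)

theorem Real.rpow_div_mul_rpow_one_div_le {a b c p q : ℝ} (ha : 0 ≤ a) (hb : 0 ≤ b) (hc : 0 ≤ c)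
    (hp : 0 < p) (h : a ^ q * b ≤ c ^ p) : a ^ (q / p) * b ^ (1 / p) ≤ c := by
  calc a ^ (q / p) * b ^ (1 / p) = (a ^ q * b) ^ (1 / p) := by
        rw [Real.mul_rpow (by positivity) hb, div_eq_mul_one_div q p, Real.rpow_mul ha]
    _ ≤ (c ^ p) ^ (1 / p) := by gcongr
    _ = c := by rw [← Real.rpow_mul hc, mul_one_div_cancel hp.ne', Real.rpow_one]

section ElementarySymmetric

variable {n : ℕ} {lam : Fin n → ℝ}

theorem esymmS_eq_eval (m : ℕ) :
    esymmS n m lam = MvPolynomial.eval lam (MvPolynomial.esymm (Fin n) ℝ m) := by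
  simp [esymmS, MvPolynomial.esymm, map_sum, map_prod]

theorem esymmS_one : esymmS n 1 lam = ∑ i, lam i := by
  simp [esymmS, powersetCard_one]

theorem esymmS_one_sq : esymmS n 1 lam ^ 2 = ∑ i, lam i ^ 2 + 2 * esymmS n 2 lam := by
  have h := congrArg (MvPolynomial.eval lam) (MvPolynomial.mul_esymm_eq_sum (Fin n) ℝ 2)
  rw [show {a ∈ antidiagonal 2 | a.1 < 2} = {(0, 2), (1, 1)} by decide, sum_pair (by decide)] at h
  simp only [map_mul, map_add, map_pow, map_neg, map_one, map_natCast,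
    MvPolynomial.esymm_zero, MvPolynomial.esymm_one, MvPolynomial.psum, map_sum,
    MvPolynomial.eval_X, pow_one, ← esymmS_eq_eval] at h
  rw [esymmS_one]
  linear_combination (-1) * h

theorem esymmS_eq_coeff_prod {m : ℕ} (hm : m ≤ n) :
    esymmS n m lam = (∏ i, (X + C (lam i))).coeff (n - m) := by
  rw [prod_X_add_C_coeff _ _ (by simp), esymmS, card_univ, Fintype.card_fin,
    Nat.sub_sub_self hm]

theorem esymmS_eq_zero_of_lt {m : ℕ} (h : n < m) : esymmS n m lam = 0 := by
  rw [esymmS, powersetCard_eq_empty.mpr (by simpa using h), sum_empty]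

theorem esymmS_mul_esymmS_le_sq (m : ℕ) :
    esymmS n m lam * esymmS n (m + 2) lam ≤ esymmS n (m + 1) lam ^ 2 := by
  obtain hlt | hle := lt_or_ge n (m + 2)
  · rw [esymmS_eq_zero_of_lt hlt, mul_zero]; positivity
  have hsplit : (∏ i, (X + C (lam i))).Splits := Splits.prod fun i _ => Splits.X_add_C (lam i)
  have := hsplit.coeff_mul_coeff_le_sq (n - (m + 2))
  rw [show n - (m + 2) + 1 = n - (m + 1) by omega, show n - (m + 2) + 2 = n - m by omega] at this
  rw [esymmS_eq_coeff_prod (by omega), esymmS_eq_coeff_prod hle, esymmS_eq_coeff_prod (by omega)]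
  linarith

theorem sum_esymmDel (m : ℕ) :
    ∑ i, esymmDel n m lam i = (n - m : ℕ) * esymmS n m lam := by
  simp only [esymmDel, esymmS, Finset.mul_sum]
  rw [Finset.sum_comm' (t' := univ.powersetCard m) (s' := fun s => sᶜ)]
  · refine sum_congr rfl fun s hs => ?_
    rw [sum_const, card_compl, (mem_powersetCard.1 hs).2, nsmul_eq_mul, Fintype.card_fin]
  · intro i s
    simp only [mem_univ, mem_powersetCard, subset_erase, mem_compl, subset_univ]
    tauto

end ElementarySymmetric

namespace GammaCone

variable {n k : ℕ} {lam : Fin n → ℝ}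

theorem mono (h : GammaCone n k lam) {m : ℕ} (hm : m ≤ k) : GammaCone n m lam :=
  fun j hj1 hjm => h j hj1 (hjm.trans hm)

theorem exists_pos (h : GammaCone n 1 lam) : ∃ i, 0 < lam i := by
  have hsum : ∑ _i : Fin n, (0 : ℝ) < ∑ i, lam i := by
    simpa [← esymmS_one] using h 1 le_rfl le_rfl
  obtain ⟨i, -, hi⟩ := exists_lt_of_sum_lt hsum
  exact ⟨i, hi⟩

theorem lt_esymmS_one (h : GammaCone n 2 lam) (i : Fin n) : lam i < esymmS n 1 lam := by
  have hsq : lam i ^ 2 < esymmS n 1 lam ^ 2 := by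
    rw [esymmS_one_sq]
    have := single_le_sum (fun j _ => sq_nonneg (lam j)) (mem_univ i)
    linarith [h 2 one_le_two le_rfl]
  exact lt_of_pow_lt_pow_left₀ 2 (h 1 le_rfl one_le_two).le hsq

theorem esymmS_one_mul_pow_le (h : GammaCone n k lam) (hk : 2 ≤ k) :
    esymmS n 1 lam * esymmS n k lam ^ (k - 2) ≤ esymmS n (k - 1) lam ^ (k - 1) := by
  have := mul_pow_le_pow_succ_of_log_concave (a := fun j => esymmS n (j + 1) lam) (N := k - 1)
    (fun i hi => h (i + 1) (by omega) (by omega)) (fun i _ => esymmS_mul_esymmS_le_sq (i + 1))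
    (k - 2) (by omega)
  rwa [show k - 2 + 1 + 1 = k by omega, show k - 2 + 1 = k - 1 by omega] at this

theorem esymmS_pow_mul_le_pow (h : GammaCone n k lam) (hk : 2 ≤ k) (i : Fin n) :
    esymmS n k lam ^ (k - 2) * lam i ≤ esymmS n (k - 1) lam ^ (k - 1) :=
  calc esymmS n k lam ^ (k - 2) * lam i ≤ esymmS n k lam ^ (k - 2) * esymmS n 1 lam := by
        have := h k (by omega) le_rfl
        gcongr
        exact ((h.mono hk).lt_esymmS_one i).le
    _ ≤ esymmS n (k - 1) lam ^ (k - 1) := by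
        rw [mul_comm]; exact h.esymmS_one_mul_pow_le hk

end GammaCone

/-- Lower bound for `Σ_i σ_{k−1}(λ|i)` in terms of `S_k(λ)` and `max_i λ_i`. -/
theorem sum_esymmDel_lower_bound (n k : ℕ) (hk : 2 ≤ k) (hkn : k ≤ n) :
    ∃ c : ℝ, 0 < c ∧ ∀ lam : Fin n → ℝ, GammaCone n k lam →
      c * esymmS n k lam ^ (((k : ℝ) - 2) / ((k : ℝ) - 1)) *
          (Finset.univ.sup' (Finset.univ_nonempty_iff.mpr ⟨⟨0, by omega⟩⟩) lam) ^
            ((1 : ℝ) / ((k : ℝ) - 1)) ≤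
        ∑ i : Fin n, esymmDel n (k - 1) lam i := by
  refine ⟨1, one_pos, fun lam hlam => ?_⟩
  obtain ⟨i₀, -, hi₀⟩ := exists_mem_eq_sup' (univ_nonempty_iff.mpr ⟨⟨0, by omega⟩⟩) lam
  obtain ⟨i, hi⟩ := (hlam.mono (by omega)).exists_pos
  have hSk1 : 0 < esymmS n (k - 1) lam := hlam (k - 1) (by omega) (by omega)
  have hk' : (2 : ℝ) ≤ k := by exact_mod_cast hk
  have hnewton := hlam.esymmS_pow_mul_le_pow hk i₀
  rw [← Real.rpow_natCast, ← Real.rpow_natCast] at hnewton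
  push_cast [Nat.cast_sub hk, Nat.cast_sub (one_le_two.trans hk)] at hnewton
  rw [hi₀, one_mul, sum_esymmDel]
  calc _ ≤ esymmS n (k - 1) lam :=
        Real.rpow_div_mul_rpow_one_div_le (hlam k (by omega) le_rfl).le
          (hi.le.trans (hi₀ ▸ le_sup' lam (mem_univ i))) hSk1.le (by linarith) hnewton
    _ ≤ (n - (k - 1) : ℕ) * esymmS n (k - 1) lam :=
        le_mul_of_one_le_left hSk1.le (by exact_mod_cast (show 1 ≤ n - (k - 1) by omega))
end

section
/- Let 2 ≤ k ≤ n, let 0 < δ ≤ 1/2, and let λ ∈ Γ_k ⊂ ℝ^n with λ_1 = max_i λ_i. Suppose p ≠ 1 is an index such that λ_p ≥ −δ·λ_1 and σ_{k−1}(λ|p) ≥ δ^{−1}·σ_{k−1}(λ|1). Then (2δ·λ_1 + (1−2δ)·λ_p) · σ_{k−1}(λ|p) ≥ λ_1 · σ_{k−1}(λ|1). -/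
/-!
The heart of the matter is `σ_{k-1}(λ|i) ≥ 0` on `Γ_k`. As `Γ_k + t𝟙 ⊆ Γ_k` for `t ≥ 0`, it
follows from the closed form of `λ ∈ Γ_{m+1} ⇒ λ|i ∈ Γ_m`: if `λ + t𝟙 ∈ Γ_{m+1}` for all `t > 0`, then `λ|i + t𝟙 ∈ Γ_m` for all
`t > 0`. By induction on `m` only `σ_m(λ|i + t𝟙) > 0` is in doubt. This polynomial in `t` tends
to `+∞`, so if it fails somewhere it has a last zero `c > 0`. At `μ = λ + c𝟙` we have
`σ_m(μ|i) = 0`, and the induction hypothesis applied to `μ|i` gives `σ_{m-1}(μ|il) ≥ 0`, hence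
`(m+1) σ_{m+1}(μ|i) = Σ_l μ_l σ_m(μ|il) = -Σ_l μ_l² σ_{m-1}(μ|il) ≤ 0` and
`σ_{m+1}(μ) = σ_{m+1}(μ|i) ≤ 0`, contradicting `μ ∈ Γ_{m+1}`.

Given `σ_{k-1}(λ|1) ≥ 0`, the inequality is elementary: `λ_1 ≥ 0`,
`σ_{k-1}(λ|1) ≤ δ σ_{k-1}(λ|p)` and `δ λ_1 + (1 - 2δ) λ_p ≥ 2δ² λ_1 ≥ 0`.
-/

open Finset

section Algebra

variable {ι R : Type*} [CommSemiring R]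

def esymmOn (T : Finset ι) (w : ι → R) (m : ℕ) : R :=
  ∑ s ∈ T.powersetCard m, ∏ i ∈ s, w i

@[simp]
lemma esymmOn_zero (T : Finset ι) (w : ι → R) : esymmOn T w 0 = 1 := by
  simp [esymmOn]

lemma esymmOn_eq_zero_of_card_lt {T : Finset ι} {m : ℕ} (h : #T < m) (w : ι → R) :
    esymmOn T w m = 0 := by
  rw [esymmOn, powersetCard_eq_empty.2 h, sum_empty]

variable [DecidableEq ι]

lemma esymmOn_insert {T : Finset ι} {a : ι} (ha : a ∉ T) (w : ι → R) (m : ℕ) :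
    esymmOn (insert a T) w (m + 1) = w a * esymmOn T w m + esymmOn T w (m + 1) := by
  have hnot : ∀ u ∈ T.powersetCard m, a ∉ u := fun u hu h => ha ((mem_powersetCard.1 hu).1 h)
  have hdisj : Disjoint (T.powersetCard (m + 1)) ((T.powersetCard m).image (insert a)) := by
    simp only [disjoint_left, mem_image, mem_powersetCard]
    rintro _ ⟨hsT, -⟩ ⟨u, -, rfl⟩
    exact ha (hsT (mem_insert_self a u))
  have hinj : Set.InjOn (insert a) (T.powersetCard m : Set (Finset ι)) := by
    intro u hu v hv huv
    rw [← erase_insert (hnot u hu), ← erase_insert (hnot v hv), huv]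
  rw [esymmOn, powersetCard_succ_insert ha, sum_union hdisj, sum_image hinj, add_comm,
    esymmOn, esymmOn, mul_sum]
  congr 1
  exact sum_congr rfl fun u hu => prod_insert (hnot u hu)

lemma esymmOn_succ_of_mem {T : Finset ι} {i : ι} (hi : i ∈ T) (w : ι → R) (m : ℕ) :
    esymmOn T w (m + 1) = w i * esymmOn (T.erase i) w m + esymmOn (T.erase i) w (m + 1) := by
  conv_lhs => rw [← insert_erase hi]
  exact esymmOn_insert (notMem_erase i T) w m

lemma sum_powersetCard_erase_insert {T : Finset ι} {l : ι} (hl : l ∈ T) (m : ℕ)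
    (f : Finset ι → R) :
    ∑ u ∈ (T.erase l).powersetCard m, f (insert l u) =
      ∑ s ∈ T.powersetCard (m + 1) with l ∈ s, f s := by
  have hnot : ∀ u ∈ (T.erase l).powersetCard m, l ∉ u :=
    fun u hu h => notMem_erase l T ((mem_powersetCard.1 hu).1 h)
  have himage : ((T.erase l).powersetCard m).image (insert l) =
      {s ∈ T.powersetCard (m + 1) | l ∈ s} := by
    ext s
    simp only [mem_image, mem_filter, mem_powersetCard]
    constructor
    · rintro ⟨u, ⟨huT, hu⟩, rfl⟩
      have hlu : l ∉ u := fun h => notMem_erase l T (huT h)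
      refine ⟨⟨insert_subset hl (huT.trans (erase_subset l T)), ?_⟩, mem_insert_self l u⟩
      rw [card_insert_of_notMem hlu, hu]
    · rintro ⟨⟨hsT, hs⟩, hls⟩
      exact ⟨s.erase l, ⟨erase_subset_erase l hsT, by rw [card_erase_of_mem hls, hs]; rfl⟩,
        insert_erase hls⟩
  rw [← himage, sum_image]
  intro u hu v hv huv
  rw [← erase_insert (hnot u hu), ← erase_insert (hnot v hv), huv]

lemma sum_mul_esymmOn_erase (T : Finset ι) (w : ι → R) (m : ℕ) :
    ∑ l ∈ T, w l * esymmOn (T.erase l) w m = (m + 1) * esymmOn T w (m + 1) := by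
  calc ∑ l ∈ T, w l * esymmOn (T.erase l) w m
      = ∑ l ∈ T, ∑ s ∈ T.powersetCard (m + 1) with l ∈ s, ∏ i ∈ s, w i := by
        refine sum_congr rfl fun l hl => ?_
        rw [esymmOn, mul_sum, ← sum_powersetCard_erase_insert hl]
        refine sum_congr rfl fun u hu => (prod_insert fun h => ?_).symm
        exact notMem_erase l T ((mem_powersetCard.1 hu).1 h)
    _ = ∑ s ∈ T.powersetCard (m + 1), ∑ l ∈ s, ∏ i ∈ s, w i := by
        simp_rw [sum_filter]
        rw [sum_comm]
        refine sum_congr rfl fun s hs => ?_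
        rw [← sum_filter, filter_mem_eq_inter, inter_eq_right.2 (mem_powersetCard.1 hs).1]
    _ = (m + 1) * esymmOn T w (m + 1) := by
        rw [esymmOn, mul_sum]
        refine sum_congr rfl fun s hs => ?_
        rw [sum_const, (mem_powersetCard.1 hs).2, nsmul_eq_mul]
        push_cast
        rfl

lemma card_powersetCard_filter_superset {T u : Finset ι} (hu : u ⊆ T) {m : ℕ} (hm : #u ≤ m) :
    #{s ∈ T.powersetCard m | u ⊆ s} = (#T - #u).choose (m - #u) := by
  have : {s ∈ T.powersetCard m | u ⊆ s} = ((T \ u).powersetCard (m - #u)).image (u ∪ ·) := by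
    ext s
    simp only [mem_filter, mem_powersetCard, mem_image]
    constructor
    · rintro ⟨⟨hsT, rfl⟩, hus⟩
      exact ⟨s \ u, ⟨sdiff_subset_sdiff hsT subset_rfl, card_sdiff_of_subset hus⟩,
        union_sdiff_of_subset hus⟩
    · rintro ⟨v, ⟨hvT, hv⟩, rfl⟩
      have hdisj : Disjoint u v := disjoint_of_subset_right hvT disjoint_sdiff
      refine ⟨⟨union_subset hu (hvT.trans sdiff_subset), ?_⟩, subset_union_left⟩
      rw [card_union_of_disjoint hdisj]
      omega
  rw [this, card_image_of_injOn, card_powersetCard, card_sdiff_of_subset hu]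
  intro v hv v' hv' h
  have hd : ∀ x ∈ (T \ u).powersetCard (m - #u), Disjoint u x := fun x hx =>
    disjoint_of_subset_right (mem_powersetCard.1 hx).1 disjoint_sdiff
  simpa [union_sdiff_cancel_left (hd v hv), union_sdiff_cancel_left (hd v' hv')] using
    congrArg (· \ u) h

lemma sum_powersetCard_sum_powersetCard {M : Type*} [AddCommMonoid M] (T : Finset ι) {j m : ℕ}
    (hjm : j ≤ m) (f : Finset ι → M) :
    ∑ s ∈ T.powersetCard m, ∑ u ∈ s.powersetCard j, f u =
      (#T - j).choose (m - j) • ∑ u ∈ T.powersetCard j, f u := by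
  rw [sum_comm' (t' := T.powersetCard j) (s' := fun u => {s ∈ T.powersetCard m | u ⊆ s})]
  · rw [smul_sum]
    refine sum_congr rfl fun u hu => ?_
    obtain ⟨huT, rfl⟩ := mem_powersetCard.1 hu
    rw [sum_const, card_powersetCard_filter_superset huT hjm]
  · intro s u
    simp only [mem_powersetCard, mem_filter]
    constructor
    · rintro ⟨⟨hsT, hs⟩, hus, hu⟩
      exact ⟨⟨⟨hsT, hs⟩, hus⟩, hus.trans hsT, hu⟩
    · rintro ⟨⟨⟨hsT, hs⟩, hus⟩, -, hu⟩
      exact ⟨⟨hsT, hs⟩, hus, hu⟩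

lemma esymmOn_add_const (T : Finset ι) (w : ι → R) (t : R) (m : ℕ) :
    esymmOn T (fun i => w i + t) m =
      ∑ j ∈ range (m + 1), ((#T - j).choose (m - j) : R) * t ^ (m - j) * esymmOn T w j := by
  calc esymmOn T (fun i => w i + t) m
      = ∑ s ∈ T.powersetCard m, ∑ j ∈ range (m + 1), ∑ u ∈ s.powersetCard j,
          (∏ i ∈ u, w i) * t ^ (m - j) := by
        refine sum_congr rfl fun s hs => ?_
        rw [prod_add, sum_powerset, (mem_powersetCard.1 hs).2]
        refine sum_congr rfl fun j _ => sum_congr rfl fun u hu => ?_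
        obtain ⟨hus, hu⟩ := mem_powersetCard.1 hu
        rw [prod_const, card_sdiff_of_subset hus, (mem_powersetCard.1 hs).2, hu]
    _ = ∑ j ∈ range (m + 1), (#T - j).choose (m - j) •
          ∑ u ∈ T.powersetCard j, (∏ i ∈ u, w i) * t ^ (m - j) := by
        rw [sum_comm]
        exact sum_congr rfl fun j hj =>
          sum_powersetCard_sum_powersetCard T (Nat.lt_succ_iff.1 (mem_range.1 hj)) _
    _ = _ := by
        refine sum_congr rfl fun j _ => ?_
        rw [esymmOn, nsmul_eq_mul, ← sum_mul]
        ring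

end Algebra

open Filter Topology

section Real

variable {ι : Type*}

lemma exists_forall_gt_pos_of_eventually_pos {g : ℝ → ℝ} (hg : Continuous g) {a : ℝ}
    (ha : g a ≤ 0) (hpos : ∀ᶠ t in atTop, 0 < g t) :
    ∃ c, a ≤ c ∧ g c ≤ 0 ∧ ∀ t > c, 0 < g t := by
  obtain ⟨b, hb⟩ := eventually_atTop.1 hpos
  have hbound : ∀ t, g t ≤ 0 → t < b := fun t ht => not_le.1 fun h => (hb t h).not_ge ht
  have hK : IsCompact (Set.Icc a b ∩ {t | g t ≤ 0}) :=
    isCompact_Icc.inter_right (isClosed_le hg continuous_const)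
  obtain ⟨c, ⟨⟨hac, -⟩, hgc⟩, hmax⟩ :=
    hK.exists_isGreatest ⟨a, ⟨le_rfl, (hbound a ha).le⟩, ha⟩
  refine ⟨c, hac, hgc, fun t hct => not_le.1 fun hgt => hct.not_ge ?_⟩
  exact hmax ⟨⟨hac.trans hct.le, (hbound t hgt).le⟩, hgt⟩

lemma continuous_esymmOn_add_const (T : Finset ι) (w : ι → ℝ) (m : ℕ) :
    Continuous fun t : ℝ => esymmOn T (fun i => w i + t) m := by
  unfold esymmOn
  fun_prop

lemma esymmOn_nonneg_of_forall_add_const_pos {T : Finset ι} {w : ι → ℝ} {m : ℕ}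
    (h : ∀ t > 0, 0 < esymmOn T (fun i => w i + t) m) : 0 ≤ esymmOn T w m := by
  have hcont := (continuous_esymmOn_add_const T w m).tendsto 0
  simp only [add_zero] at hcont
  exact ge_of_tendsto (hcont.mono_left (nhdsWithin_le_nhds (s := Set.Ioi 0)))
    (eventually_nhdsWithin_of_forall fun t ht => (h t ht).le)

lemma choose_mul_pow_add_esymmOn_le [DecidableEq ι] {T : Finset ι} {w : ι → ℝ} {m : ℕ}
    (hm : 0 < m) (hw : ∀ j < m, 0 ≤ esymmOn T w j) {t : ℝ} (ht : 0 ≤ t) :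
    (#T).choose m * t ^ m + esymmOn T w m ≤ esymmOn T (fun i => w i + t) m := by
  have hterm : ∀ j ∈ range m,
      0 ≤ ((#T - j).choose (m - j) : ℝ) * t ^ (m - j) * esymmOn T w j :=
    fun j hj => by have := hw j (mem_range.1 hj); positivity
  have hfirst := single_le_sum hterm (mem_range.2 hm)
  rw [esymmOn_add_const, sum_range_succ]
  simp only [Nat.sub_zero, Nat.sub_self, esymmOn_zero, mul_one, pow_zero, Nat.choose_zero_right,
    Nat.cast_one, one_mul] at hfirst ⊢
  linarith

lemma tendsto_esymmOn_add_const_atTop [DecidableEq ι] {T : Finset ι} {w : ι → ℝ} {m : ℕ}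
    (hm : 0 < m) (hmT : m ≤ #T) (hw : ∀ j < m, 0 ≤ esymmOn T w j) :
    Tendsto (fun t => esymmOn T (fun i => w i + t) m) atTop atTop := by
  have hchoose : (0 : ℝ) < (#T).choose m := by exact_mod_cast Nat.choose_pos hmT
  refine tendsto_atTop_mono' _ ?_ <| tendsto_atTop_add_const_right _ (esymmOn T w m) <|
    (tendsto_pow_atTop hm.ne').const_mul_atTop hchoose
  filter_upwards [eventually_ge_atTop 0] with t ht
  exact choose_mul_pow_add_esymmOn_le hm hw ht

end Real

section Garding

variable {ι : Type*} {T : Finset ι} {k : ℕ} {w : ι → ℝ}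

def InGardingCone (T : Finset ι) (k : ℕ) (w : ι → ℝ) : Prop :=
  ∀ j, 1 ≤ j → j ≤ k → 0 < esymmOn T w j

lemma InGardingCone.mono {l : ℕ} (h : InGardingCone T k w) (hlk : l ≤ k) :
    InGardingCone T l w :=
  fun j hj hjl => h j hj (hjl.trans hlk)

lemma InGardingCone.succ (h : InGardingCone T k w) (hk : 0 < esymmOn T w (k + 1)) :
    InGardingCone T (k + 1) w := by
  intro j hj hjk
  rcases hjk.lt_or_eq with hjk | rfl
  · exact h j hj (by omega)
  · exact hk

lemma esymmOn_nonneg_of_forall_add_const (h : ∀ t > 0, InGardingCone T k (fun i => w i + t))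
    {j : ℕ} (hjk : j ≤ k) : 0 ≤ esymmOn T w j := by
  rcases j with _ | j
  · simp
  · exact esymmOn_nonneg_of_forall_add_const_pos fun t ht => h t ht _ (by omega) hjk

variable [DecidableEq ι]

lemma InGardingCone.add_const (h : InGardingCone T k w) {t : ℝ} (ht : 0 ≤ t) :
    InGardingCone T k (fun i => w i + t) := by
  intro j hj hjk
  have hlow : ∀ r < j, 0 ≤ esymmOn T w r := by
    rintro (_ | r) hr
    · simp
    · exact (h _ (by omega) (by omega)).le
  have := choose_mul_pow_add_esymmOn_le hj hlow ht
  have : 0 ≤ ((#T).choose j : ℝ) * t ^ j := by positivity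
  linarith [h j hj hjk]

lemma esymmOn_add_two_nonpos {ν : ι → ℝ} {m : ℕ} (h0 : esymmOn T ν (m + 1) = 0)
    (hdel : ∀ l ∈ T, 0 ≤ esymmOn (T.erase l) ν m) : esymmOn T ν (m + 2) ≤ 0 := by
  have hterm : ∀ l ∈ T, ν l * esymmOn (T.erase l) ν (m + 1) ≤ 0 := fun l hl => by
    have hE : esymmOn (T.erase l) ν (m + 1) = -(ν l * esymmOn (T.erase l) ν m) := by
      linarith [esymmOn_succ_of_mem hl ν m]
    rw [hE, mul_neg, ← mul_assoc, neg_nonpos]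
    exact mul_nonneg (mul_self_nonneg _) (hdel l hl)
  have hsum := sum_nonpos hterm
  rw [sum_mul_esymmOn_erase] at hsum
  exact nonpos_of_mul_nonpos_right hsum (by positivity)

theorem forall_add_const_inGardingCone_erase
    (h : ∀ t > 0, InGardingCone T (k + 1) (fun l => w l + t)) {i : ι} (hi : i ∈ T) :
    ∀ t > 0, InGardingCone (T.erase i) k (fun l => w l + t) := by
  induction k generalizing T w i with
  | zero => exact fun _ _ j hj hj0 => absurd hj0 (by omega)
  | succ k ih =>
    set T' := T.erase i
    have hlow : ∀ t > 0, InGardingCone T' k (fun l => w l + t) :=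
      ih (fun t ht => (h t ht).mono (by omega)) hi
    suffices htop : ∀ t > 0, 0 < esymmOn T' (fun l => w l + t) (k + 1) from
      fun t ht => (hlow t ht).succ (htop t ht)
    by_contra! ⟨t₁, ht₁, hneg⟩
    have hcard : k + 1 ≤ #T' := by
      by_contra! hlt
      have := h 1 one_pos (k + 2) (by omega) le_rfl
      rw [esymmOn_eq_zero_of_card_lt (by rw [card_erase_of_mem hi] at hlt; omega)] at this
      exact this.false
    have hev := (tendsto_esymmOn_add_const_atTop k.succ_pos hcard
      fun j hj => esymmOn_nonneg_of_forall_add_const hlow (by omega)).eventually_gt_atTop 0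
    obtain ⟨c, hc, hgc, hpos⟩ := exists_forall_gt_pos_of_eventually_pos
      (continuous_esymmOn_add_const T' w (k + 1)) hneg hev
    have hν : ∀ r > 0, InGardingCone T' (k + 1) (fun l => (w l + c) + r) := by
      intro r hr
      simp only [add_assoc]
      exact (hlow (c + r) (by linarith)).succ (hpos (c + r) (by linarith))
    have hzero : esymmOn T' (fun l => w l + c) (k + 1) = 0 :=
      le_antisymm hgc (esymmOn_nonneg_of_forall_add_const hν le_rfl)
    have hdel : ∀ l ∈ T', 0 ≤ esymmOn (T'.erase l) (fun l => w l + c) k := fun l hl =>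
      esymmOn_nonneg_of_forall_add_const (ih hν hl) le_rfl
    have hT := h c (by linarith) (k + 2) (by omega) le_rfl
    rw [esymmOn_succ_of_mem hi, hzero, mul_zero, zero_add] at hT
    exact (esymmOn_add_two_nonpos hzero hdel).not_gt hT

theorem InGardingCone.esymmOn_erase_nonneg (h : InGardingCone T k w) {i : ι} (hi : i ∈ T) :
    0 ≤ esymmOn (T.erase i) w (k - 1) := by
  rcases k with _ | k
  · simp
  · exact esymmOn_nonneg_of_forall_add_const
      (forall_add_const_inGardingCone_erase (fun t ht => h.add_const ht.le) hi) le_rfl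

end Garding

theorem hmw_key_inequality_general (n k : ℕ)
    (δ : ℝ) (hδ0 : 0 < δ) (hδ : δ ≤ 1 / 2)
    (lam : Fin n → ℝ) (hlam : GammaCone n k lam)
    (i1 p : Fin n) (hmax : ∀ i, lam i ≤ lam i1)
    (hlp : -δ * lam i1 ≤ lam p)
    (hsig : δ⁻¹ * esymmDel n (k - 1) lam i1 ≤ esymmDel n (k - 1) lam p) :
    lam i1 * esymmDel n (k - 1) lam i1 ≤
      (2 * δ * lam i1 + (1 - 2 * δ) * lam p) * esymmDel n (k - 1) lam p := by
  -- `GammaCone n k` and `esymmDel` unfold to `InGardingCone univ k` and `esymmOn (univ.erase _)`.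
  have hA : 0 ≤ esymmDel n (k - 1) lam i1 :=
    InGardingCone.esymmOn_erase_nonneg (T := univ) hlam (mem_univ i1)
  have hAB : esymmDel n (k - 1) lam i1 ≤ δ * esymmDel n (k - 1) lam p := by
    rwa [inv_mul_le_iff₀ hδ0] at hsig
  have hB : 0 ≤ esymmDel n (k - 1) lam p := nonneg_of_mul_nonneg_right (hA.trans hAB) hδ0
  have hl1 : 0 ≤ lam i1 := by nlinarith [hmax p]
  have hcoef : 0 ≤ δ * lam i1 + (1 - 2 * δ) * lam p := by
    have h2δ : 0 ≤ 1 - 2 * δ := by linarith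
    have hshift : 0 ≤ lam p + δ * lam i1 := by linarith
    nlinarith [mul_nonneg h2δ hshift, mul_nonneg (mul_nonneg hδ0.le hδ0.le) hl1]
  calc lam i1 * esymmDel n (k - 1) lam i1
      ≤ lam i1 * (δ * esymmDel n (k - 1) lam p) := mul_le_mul_of_nonneg_left hAB hl1
    _ ≤ _ := by nlinarith [mul_nonneg hcoef hB]

/-- The key Hou–Ma–Wu algebraic inequality, Case 2 form. -/
theorem hmw_key_inequality (n k : ℕ) (hk : 2 ≤ k) (hkn : k ≤ n)
    (δ : ℝ) (hδ0 : 0 < δ) (hδ : δ ≤ 1 / 2)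
    (lam : Fin n → ℝ) (hlam : GammaCone n k lam)
    (i1 p : Fin n) (hmax : ∀ i, lam i ≤ lam i1) (hp : p ≠ i1)
    (hlp : -δ * lam i1 ≤ lam p)
    (hsig : δ⁻¹ * esymmDel n (k - 1) lam i1 ≤ esymmDel n (k - 1) lam p) :
    lam i1 * esymmDel n (k - 1) lam i1 ≤
      (2 * δ * lam i1 + (1 - 2 * δ) * lam p) * esymmDel n (k - 1) lam p :=
  hmw_key_inequality_general n k δ hδ0 hδ lam hlam i1 p hmax hlp hsig
end
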